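/- Let 1 ≤ α < 2 and let σ ∈ L¹(ℝ) with ∫ σ = m and ∫ |σ| = M. Let (p_t)_{t ∈ (0,1]} be a family of bounded measurable functions on ℝ, measurable in (t,x), such that sup_x |p_t(x)| ≤ c t^{−1/α} for all t ∈ (0,1]. For t ∈ (0,1] define q_t(x) = e^{tm} Σ_{n=0}^∞ ((−t)^n/n!) (p_t * σ^{*n})(x), where the n = 0 term is p_t(x). Then there exists a constant C = C(c, m, M, α) such that for every x ∈ ℝ and every t₀ ∈ (0,1]: ∫_0^{t₀} |p_t(x) − e^{−2mt} q_t(x)| dt ≤ C t₀^{2−1/α}. -/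

import Mathlib

/-!
Write `e^{-2mt} q_t(x) = e^{-mt} Σ_n ((-t)^n/n!) (p_t * σ^{*n})(x)`. Young's inequality gives
`|(p_t * σ^{*n})(x)| ≤ ‖p_t‖_∞ M^n`, so the series differs from its `n = 0` term `p_t(x)` by at most
`‖p_t‖_∞ (e^{tM} - 1)`, while `|1 - e^{-mt}| ≤ e^{|m|t} - 1`. Together,
`|p_t(x) - e^{-2mt} q_t(x)| ≤ ‖p_t‖_∞ (e^{(|m|+M)t} - 1) = O(t^{-1/α} · t)`, and since `α ≥ 1` this is
`O(t₀^{1-1/α})` on `(0, t₀]`; integrating over an interval of length `t₀` gives `O(t₀^{2-1/α})`.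
-/

open MeasureTheory

/-- Convolution of two functions on `ℝ` (Bochner integral). -/
noncomputable def convolve (f g : ℝ → ℝ) : ℝ → ℝ := fun x => ∫ y, f (x - y) * g y

/-- `convPowFun σ n = σ^{*(n+1)}`, the `(n+1)`-fold convolution power of `σ`. -/
noncomputable def convPowFun (σ : ℝ → ℝ) : ℕ → ℝ → ℝ
  | 0 => σ
  | n + 1 => convolve (convPowFun σ n) σ

/-- `seriesTerm p σ n = p * σ^{*n}`, with the `n = 0` term equal to `p` itself. -/
noncomputable def seriesTerm (p σ : ℝ → ℝ) : ℕ → ℝ → ℝ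
  | 0 => p
  | n + 1 => convolve p (convPowFun σ n)

open Set Real
open scoped Nat

section Convolution

open scoped Convolution in
theorem convolve_eq_convolution (f g : ℝ → ℝ) :
    convolve f g = f ⋆[ContinuousLinearMap.mul ℝ ℝ] g := by
  ext x
  rw [convolve, convolution_def,
    ← integral_sub_left_eq_self (fun t => ContinuousLinearMap.mul ℝ ℝ (f t) (g (x - t))) volume x]
  simp

theorem integrable_convolve {f g : ℝ → ℝ} (hf : Integrable f) (hg : Integrable g) :
    Integrable (convolve f g) :=
  convolve_eq_convolution f g ▸ hf.integrable_convolution (ContinuousLinearMap.mul ℝ ℝ) hg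

theorem integral_abs_convolve_le {f g : ℝ → ℝ} (hf : Integrable f) (hg : Integrable g) :
    ∫ x, |convolve f g x| ≤ (∫ x, |f x|) * ∫ x, |g x| := by
  have hprod : Integrable (fun q : ℝ × ℝ => f (q.1 - q.2) * g q.2) (volume.prod volume) := by
    simpa [mul_comm] using hg.convolution_integrand (ContinuousLinearMap.mul ℝ ℝ) hf
  have hpointwise : ∀ x, |convolve f g x| ≤ ∫ y, |f (x - y) * g y| := fun x =>
    norm_integral_le_integral_norm (fun y => f (x - y) * g y)
  have hinner : ∀ y, ∫ x, |f (x - y) * g y| = (∫ x, |f x|) * |g y| := fun y => by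
    simp_rw [abs_mul]
    rw [integral_mul_const, integral_sub_right_eq_self (fun x => |f x|) y]
  calc ∫ x, |convolve f g x| ≤ ∫ x, ∫ y, |f (x - y) * g y| :=
        integral_mono_of_nonneg (.of_forall fun _ => abs_nonneg _)
          hprod.integral_norm_prod_left (.of_forall hpointwise)
    _ = ∫ y, ∫ x, |f (x - y) * g y| := integral_integral_swap hprod.norm
    _ = (∫ x, |f x|) * ∫ x, |g x| := by simp_rw [hinner, integral_const_mul]

theorem abs_convolve_le {f g : ℝ → ℝ} {B : ℝ} (hf : ∀ x, |f x| ≤ B) (hg : Integrable g)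
    (x : ℝ) : |convolve f g x| ≤ B * ∫ y, |g y| := by
  unfold convolve
  rw [← integral_const_mul]
  refine norm_integral_le_of_norm_le (f := fun y => f (x - y) * g y) (hg.norm.const_mul B)
    (.of_forall fun y => ?_)
  rw [Real.norm_eq_abs, abs_mul]
  exact mul_le_mul_of_nonneg_right (hf _) (abs_nonneg _)

theorem integrable_convPowFun {σ : ℝ → ℝ} (hσ : Integrable σ) :
    ∀ n, Integrable (convPowFun σ n)
  | 0 => hσ
  | n + 1 => integrable_convolve (integrable_convPowFun hσ n) hσ

theorem integral_abs_convPowFun_le {σ : ℝ → ℝ} (hσ : Integrable σ) :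
    ∀ n, ∫ x, |convPowFun σ n x| ≤ (∫ x, |σ x|) ^ (n + 1)
  | 0 => by simp [convPowFun]
  | n + 1 => calc
      ∫ x, |convPowFun σ (n + 1) x| ≤ (∫ x, |convPowFun σ n x|) * ∫ x, |σ x| :=
        integral_abs_convolve_le (integrable_convPowFun hσ n) hσ
      _ ≤ (∫ x, |σ x|) ^ (n + 1) * ∫ x, |σ x| :=
        mul_le_mul_of_nonneg_right (integral_abs_convPowFun_le hσ n)
          (integral_nonneg fun _ => abs_nonneg _)
      _ = (∫ x, |σ x|) ^ (n + 2) := by ring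

theorem abs_seriesTerm_le {f σ : ℝ → ℝ} (hσ : Integrable σ) {B : ℝ} (hf : ∀ x, |f x| ≤ B) :
    ∀ n x, |seriesTerm f σ n x| ≤ B * (∫ y, |σ y|) ^ n
  | 0, x => by simpa [seriesTerm] using hf x
  | n + 1, x =>
    (abs_convolve_le hf (integrable_convPowFun hσ n) x).trans <|
      mul_le_mul_of_nonneg_left (integral_abs_convPowFun_le hσ n) ((abs_nonneg _).trans (hf 0))

end Convolution

section ExponentialSeries

theorem Real.hasSum_pow_div_factorial (x : ℝ) : HasSum (fun n => x ^ n / n !) (exp x) :=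
  Real.exp_eq_exp_ℝ ▸ NormedSpace.expSeries_div_hasSum_exp x

theorem abs_tsum_sub_apply_zero_le {a : ℕ → ℝ} {B r : ℝ} (h : ∀ n, |a n| ≤ B * (r ^ n / n !)) :
    |∑' n, a n - a 0| ≤ B * (exp r - 1) := by
  have hmajorant := (Real.hasSum_pow_div_factorial r).mul_left B
  have htail : HasSum (fun n => B * (r ^ (n + 1) / (n + 1)!)) (B * (exp r - 1)) := by
    simpa [mul_sub] using (hasSum_nat_add_iff' 1).mpr hmajorant
  rw [(Summable.of_norm_bounded hmajorant.summable h).tsum_eq_zero_add, add_sub_cancel_left]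
  exact tsum_of_norm_bounded (f := fun n => a (n + 1)) htail fun n => h (n + 1)

theorem Real.abs_exp_sub_one_le_exp_abs_sub_one (x : ℝ) : |exp x - 1| ≤ exp |x| - 1 := by
  have h := abs_tsum_sub_apply_zero_le (a := fun n => x ^ n / n !) (B := 1) (r := |x|) fun n => by
    rw [abs_div, abs_pow, Nat.abs_cast, one_mul]
  simpa [(Real.hasSum_pow_div_factorial x).tsum_eq] using h

theorem Real.exp_sub_one_le_mul_exp (x : ℝ) : exp x - 1 ≤ x * exp x := calc
  exp x - 1 = exp x * (1 - exp (-x)) := by rw [mul_sub, ← exp_add]; simp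
  _ ≤ exp x * x := by gcongr; linarith [add_one_le_exp (-x)]
  _ = x * exp x := mul_comm _ _

end ExponentialSeries

-- `q_t = perturbedDensity p_t σ m t`.
noncomputable def perturbedDensity (f σ : ℝ → ℝ) (m t x : ℝ) : ℝ :=
  exp (t * m) * ∑' n : ℕ, ((-t) ^ n / n !) * seriesTerm f σ n x

section PerturbedDensity

variable {f σ : ℝ → ℝ} {B t : ℝ}

theorem abs_tsum_seriesTerm_sub_le (hσ : Integrable σ) (hf : ∀ x, |f x| ≤ B) (ht : 0 ≤ t)
    (x : ℝ) :
    |∑' n : ℕ, ((-t) ^ n / n !) * seriesTerm f σ n x - f x| ≤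
      B * (exp (t * ∫ y, |σ y|) - 1) := by
  have h := abs_tsum_sub_apply_zero_le (a := fun n => ((-t) ^ n / n !) * seriesTerm f σ n x)
    (B := B) (r := t * ∫ y, |σ y|) fun n => by
      rw [abs_mul, abs_div, abs_pow, abs_neg, abs_of_nonneg ht, Nat.abs_cast]
      calc t ^ n / n ! * |seriesTerm f σ n x| ≤ t ^ n / n ! * (B * (∫ y, |σ y|) ^ n) := by
            gcongr; exact abs_seriesTerm_le hσ hf n x
        _ = B * ((t * ∫ y, |σ y|) ^ n / n !) := by ring
  simpa [seriesTerm] using h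

theorem abs_sub_exp_mul_perturbedDensity_le (hσ : Integrable σ) (hf : ∀ x, |f x| ≤ B)
    (ht : 0 ≤ t) (m x : ℝ) :
    |f x - exp (-2 * m * t) * perturbedDensity f σ m t x| ≤
      B * (exp ((|m| + ∫ y, |σ y|) * t) - 1) := by
  set S := ∑' n : ℕ, ((-t) ^ n / n !) * seriesTerm f σ n x
  have hS := abs_tsum_seriesTerm_sub_le hσ hf ht x
  have hdamp : |exp (-(m * t)) - 1| ≤ exp (|m| * t) - 1 := by
    simpa [abs_mul, abs_of_nonneg ht] using Real.abs_exp_sub_one_le_exp_abs_sub_one (-(m * t))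
  have hdamp_le : exp (-(m * t)) ≤ exp (|m| * t) := by
    gcongr
    exact (neg_le_abs _).trans (by rw [abs_mul, abs_of_nonneg ht])
  have hsplit : f x - exp (-2 * m * t) * perturbedDensity f σ m t x =
      -((exp (-(m * t)) - 1) * f x) - exp (-(m * t)) * (S - f x) := by
    have : exp (-2 * m * t) * exp (t * m) = exp (-(m * t)) := by rw [← exp_add]; ring_nf
    rw [perturbedDensity, ← mul_assoc, this]
    ring
  calc |f x - exp (-2 * m * t) * perturbedDensity f σ m t x|
      ≤ |-((exp (-(m * t)) - 1) * f x)| + |exp (-(m * t)) * (S - f x)| := hsplit ▸ abs_sub _ _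
    _ = |exp (-(m * t)) - 1| * |f x| + exp (-(m * t)) * |S - f x| := by
        rw [abs_neg, abs_mul, abs_mul, abs_of_pos (exp_pos _)]
    _ ≤ (exp (|m| * t) - 1) * B + exp (|m| * t) * (B * (exp (t * ∫ y, |σ y|) - 1)) :=
        add_le_add (mul_le_mul hdamp (hf x) (abs_nonneg _) ((abs_nonneg _).trans hdamp))
          (mul_le_mul hdamp_le hS (abs_nonneg _) (exp_pos _).le)
    _ = B * (exp ((|m| + ∫ y, |σ y|) * t) - 1) := by rw [add_mul, exp_add]; ring_nf

end PerturbedDensity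

theorem setLIntegral_Ioc_ofReal_le {g : ℝ → ℝ} {a b L : ℝ} (hab : a ≤ b)
    (hg : ∀ t ∈ Ioc a b, g t ≤ L) :
    ∫⁻ t in Ioc a b, ENNReal.ofReal (g t) ≤ ENNReal.ofReal (L * (b - a)) := calc
  ∫⁻ t in Ioc a b, ENNReal.ofReal (g t) ≤ ∫⁻ _ in Ioc a b, ENNReal.ofReal L :=
    setLIntegral_mono measurable_const fun t ht => ENNReal.ofReal_le_ofReal (hg t ht)
  _ = ENNReal.ofReal (L * (b - a)) := by
    rw [setLIntegral_const, Real.volume_Ioc, ENNReal.ofReal_mul' (sub_nonneg.2 hab)]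

theorem one_dim_density_comparison_general (α : ℝ) (hα1 : 1 ≤ α)
    (σ : ℝ → ℝ) (hσint : Integrable σ) (m M : ℝ)
    (hM : (∫ x, |σ x|) = M)
    (p : ℝ → ℝ → ℝ)
    (c : ℝ) (hc : 0 < c)
    (hbd : ∀ t ∈ Set.Ioc (0 : ℝ) 1, ∀ x : ℝ, |p t x| ≤ c * t ^ (-(1 / α))) :
    ∃ C : ℝ, 0 < C ∧
      ∀ x : ℝ, ∀ t₀ ∈ Set.Ioc (0 : ℝ) 1,
        (∫⁻ t in Set.Ioc (0 : ℝ) t₀,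
          ENNReal.ofReal |p t x - Real.exp (-2 * m * t) *
            (Real.exp (t * m) * ∑' n : ℕ,
              ((-t) ^ n / (n.factorial : ℝ)) * seriesTerm (p t) σ n x)|) ≤
          ENNReal.ofReal (C * t₀ ^ (2 - 1 / α)) := by
  set K := |m| + M
  have hK : 0 ≤ K := add_nonneg (abs_nonneg m) (hM ▸ integral_nonneg fun _ => abs_nonneg _)
  have hβ : 0 ≤ 1 - 1 / α := sub_nonneg.2 ((div_le_one (by linarith)).2 hα1)
  refine ⟨c * K * exp K + 1, by positivity, fun x t₀ ⟨ht₀, ht₀1⟩ => ?_⟩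
  have hpointwise : ∀ t ∈ Ioc 0 t₀, |p t x - exp (-2 * m * t) * perturbedDensity (p t) σ m t x|
      ≤ (c * K * exp K + 1) * t₀ ^ (1 - 1 / α) := by
    rintro t ⟨ht, htt₀⟩
    have ht1 : t ≤ 1 := htt₀.trans ht₀1
    calc _ ≤ c * t ^ (-(1 / α)) * (exp ((|m| + M) * t) - 1) :=
          hM ▸ abs_sub_exp_mul_perturbedDensity_le hσint (hbd t ⟨ht, ht1⟩) ht.le m x
      _ ≤ c * t ^ (-(1 / α)) * (K * t * exp K) := by
          gcongr
          refine (Real.exp_sub_one_le_mul_exp _).trans ?_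
          gcongr
          exact mul_le_of_le_one_right hK ht1
      _ = c * K * exp K * t ^ (1 - 1 / α) := by
          rw [sub_eq_neg_add, Real.rpow_add_one ht.ne']; ring
      _ ≤ (c * K * exp K + 1) * t₀ ^ (1 - 1 / α) := by gcongr; linarith
  calc _ ≤ ENNReal.ofReal ((c * K * exp K + 1) * t₀ ^ (1 - 1 / α) * (t₀ - 0)) :=
        setLIntegral_Ioc_ofReal_le ht₀.le hpointwise
    _ = ENNReal.ofReal ((c * K * exp K + 1) * t₀ ^ (2 - 1 / α)) := by
        rw [sub_zero, mul_assoc, ← Real.rpow_add_one ht₀.ne']; ring_nf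

/-- One-dimensional comparison of the stable density with the perturbed density
`q_t = e^{tm} Σ_{n≥0} ((-t)^n/n!) (p_t * σ^{*n})`: for `1 ≤ α < 2`,
`σ ∈ L¹(ℝ)` with `∫σ = m`, `∫|σ| = M`, and `sup_x |p_t(x)| ≤ c t^{-1/α}`, there is a
constant `C = C(c,m,M,α)` with
`∫_0^{t₀} |p_t(x) - e^{-2mt} q_t(x)| dt ≤ C t₀^{2-1/α}` for every `x` and
`t₀ ∈ (0,1]`. -/
theorem one_dim_density_comparison (α : ℝ) (hα1 : 1 ≤ α) (hα2 : α < 2)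
    (σ : ℝ → ℝ) (hσint : Integrable σ) (m M : ℝ)
    (hm : (∫ x, σ x) = m) (hM : (∫ x, |σ x|) = M)
    (p : ℝ → ℝ → ℝ) (hmeas : Measurable (Function.uncurry p))
    (c : ℝ) (hc : 0 < c)
    (hbd : ∀ t ∈ Set.Ioc (0 : ℝ) 1, ∀ x : ℝ, |p t x| ≤ c * t ^ (-(1 / α))) :
    ∃ C : ℝ, 0 < C ∧
      ∀ x : ℝ, ∀ t₀ ∈ Set.Ioc (0 : ℝ) 1,
        (∫⁻ t in Set.Ioc (0 : ℝ) t₀,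
          ENNReal.ofReal |p t x - Real.exp (-2 * m * t) *
            (Real.exp (t * m) * ∑' n : ℕ,
              ((-t) ^ n / (n.factorial : ℝ)) * seriesTerm (p t) σ n x)|) ≤
          ENNReal.ofReal (C * t₀ ^ (2 - 1 / α)) :=
  one_dim_density_comparison_general α hα1 σ hσint m M hM p c hc hbd
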